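/- arXiv:2411.03092 — 3 statements merged into one kernel-verified Lean document; each statement's English description precedes it below -/
import Mathlib

section
/- Let L be a free ℤ-module of finite rank, I a non-degenerate symmetric ℤ-bilinear form on L, and c a ℤ-linear automorphism of L. Then there is at most one ℤ-bilinear form χ : L × L → ℤ satisfying I(λ,λ') = χ(λ,λ') + χ(λ',λ) and χ(λ,λ') = −χ(λ', c(λ)) for all λ, λ' ∈ L. -/
/-- **Uniqueness of the Euler form** (cf. Otani, "Twist automorphism for a
generalized root system of affine ADE type", Section 2).

Let `L` be a free `ℤ`-module of finite rank, `I` a non-degenerate symmetric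
`ℤ`-bilinear form on `L`, and `c` a `ℤ`-linear automorphism of `L`.  Then there
is at most one `ℤ`-bilinear form `χ : L × L → ℤ` satisfying
`I(λ, λ') = χ(λ, λ') + χ(λ', λ)` and `χ(λ, λ') = −χ(λ', c(λ))` for all
`λ, λ' ∈ L`. -/
theorem euler_form_unique
    (L : Type*) [AddCommGroup L] [Module ℤ L] [Module.Free ℤ L] [Module.Finite ℤ L]
    (I : L →ₗ[ℤ] L →ₗ[ℤ] ℤ)
    (hsymm : ∀ x y : L, I x y = I y x)
    (hnondeg : ∀ x : L, (∀ y : L, I x y = 0) → x = 0)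
    (c : L ≃ₗ[ℤ] L)
    (χ₁ χ₂ : L →ₗ[ℤ] L →ₗ[ℤ] ℤ)
    (h₁ : ∀ x y : L, I x y = χ₁ x y + χ₁ y x)
    (h₁' : ∀ x y : L, χ₁ x y = - χ₁ y (c x))
    (h₂ : ∀ x y : L, I x y = χ₂ x y + χ₂ y x)
    (h₂' : ∀ x y : L, χ₂ x y = - χ₂ y (c x)) :
    χ₁ = χ₂ := by
  classical
  -- The difference form D
  set D : L →ₗ[ℤ] L →ₗ[ℤ] ℤ := χ₁ - χ₂ with hD
  have hDapp : ∀ x y : L, D x y = χ₁ x y - χ₂ x y := fun x y => rfl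
  -- D is antisymmetric
  have hanti : ∀ x y : L, D x y = - D y x := by
    intro x y
    have e1 := h₁ x y
    have e2 := h₂ x y
    simp only [hDapp]
    omega
  -- D also satisfies Serre duality
  have hDc : ∀ x y : L, D x y = - D y (c x) := by
    intro x y
    simp only [hDapp, h₁' x y, h₂' x y]
    ring
  -- hence D ((1 - c) x) y = 0
  have hker : ∀ x y : L, D (x - c x) y = 0 := by
    intro x y
    have : D (c x) y = D x y := by rw [hanti (c x) y, ← hDc x y]
    simp [map_sub, this]
  -- the endomorphism f = 1 - c
  set f : L →ₗ[ℤ] L := LinearMap.id - c.toLinearMap with hf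
  have hfapp : ∀ x : L, f x = x - c x := fun x => rfl
  -- f is injective, using nondegeneracy of I
  have hfinj : Function.Injective f := by
    rw [← LinearMap.ker_eq_bot, Submodule.eq_bot_iff]
    intro y hy
    have hyc : c y = y := (sub_eq_zero.mp (by simpa [hfapp] using hy)).symm
    apply hnondeg
    intro x
    have e : χ₁ y x = - χ₁ x y := by rw [h₁' y x, hyc]
    rw [hsymm y x, h₁ x y, e]
    ring
  -- choose a basis and take determinants
  set b := Module.Free.chooseBasis ℤ L with hb
  set M := LinearMap.toMatrix b b f with hM
  have hdet : M.det ≠ 0 := by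
    intro h0
    obtain ⟨v, hvne, hv⟩ := Matrix.exists_mulVec_eq_zero_iff.mpr h0
    set y := b.equivFun.symm v with hy
    have hrep : (b.repr y : _ → ℤ) = v := by
      ext i
      simp [hy, Module.Basis.equivFun_symm_apply, Finsupp.single_apply]
    have : f y = 0 := by
      have h1 : M.mulVec (b.repr y) = b.repr (f y) :=
        LinearMap.toMatrix_mulVec_repr b b f y
      rw [hrep, hv] at h1
      have : b.repr (f y) = 0 := by
        ext i
        exact (congrFun h1.symm i)
      simpa using congrArg b.repr.symm this
    have : y = 0 := hfinj (by simpa using this)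
    apply hvne
    rw [← hrep, this]
    simp
  -- adjugate gives: f ∘ g = det M • id
  set g : L →ₗ[ℤ] L := Matrix.toLin b b (Matrix.adjugate M) with hg
  have hcomp : ∀ z : L, f (g z) = M.det • z := by
    intro z
    have hfM : f = Matrix.toLin b b M := (Matrix.toLin_toMatrix b b f).symm
    calc f (g z) = Matrix.toLin b b (M * Matrix.adjugate M) z := by
          rw [Matrix.toLin_mul b b b, hfM]; rfl
      _ = M.det • z := by
          rw [Matrix.mul_adjugate, LinearEquiv.map_smul, Matrix.toLin_one]
          simp only [LinearMap.smul_apply, LinearMap.id_apply]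
          exact (Int.cast_smul_eq_zsmul ℤ M.det z).symm ▸ rfl
  -- conclude
  ext x y
  have key : M.det • D x y = 0 := by
    have := hker (g x) y
    rw [← hfapp, hcomp x] at this
    simpa using this
  have : D x y = 0 := by
    rcases smul_eq_zero.mp key with h | h
    · exact absurd h hdet
    · exact h
  have := sub_eq_zero.mp (by simpa [hDapp] using this)
  simpa using this
end

section
/- There exists exactly one Euler form χ for (L̃, Ĩ, c̃_A), i.e. exactly one ℤ-bilinear form χ : L̃ × L̃ → ℤ with Ĩ(λ,λ') = χ(λ,λ') + χ(λ',λ) and χ(λ,λ') = −χ(λ', c̃_A(λ)) for all λ, λ' ∈ L̃. -/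
namespace AffineGRS

noncomputable section

/-- The vertex set `Ṽ_A` of the affine Coxeter--Dynkin diagram attached to a
triple `A = (a 0, a 1, a 2)`: it consists of `𝟙*`, `𝟙` and the branch vertices
`(i, j)` for `i ∈ {1,2,3}` and `1 ≤ j ≤ a i − 1` (coded by `Fin (a i - 1)`). -/
inductive Vt (a : Fin 3 → ℕ) : Type where
  | star : Vt a
  | one  : Vt a
  | br   : (i : Fin 3) → Fin (a i - 1) → Vt a

def vtEquiv (a : Fin 3 → ℕ) : Vt a ≃ (Unit ⊕ Unit ⊕ (Σ i : Fin 3, Fin (a i - 1))) where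
  toFun v :=
    match v with
    | Vt.star => Sum.inl ()
    | Vt.one => Sum.inr (Sum.inl ())
    | Vt.br i j => Sum.inr (Sum.inr ⟨i, j⟩)
  invFun x :=
    match x with
    | Sum.inl _ => Vt.star
    | Sum.inr (Sum.inl _) => Vt.one
    | Sum.inr (Sum.inr ⟨i, j⟩) => Vt.br i j
  left_inv v := by cases v <;> rfl
  right_inv x := by rcases x with _ | (_ | ⟨i, j⟩) <;> rfl

instance (a : Fin 3 → ℕ) : DecidableEq (Vt a) := (vtEquiv a).decidableEq
instance (a : Fin 3 → ℕ) : Fintype (Vt a) := Fintype.ofEquiv _ (vtEquiv a).symm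

/-- The entries `Ĩ(α_u, α_v)` of the Cartan form on the basis `{α_v : v ∈ Ṽ_A}`. -/
def cartan (a : Fin 3 → ℕ) : Vt a → Vt a → ℤ
  | Vt.star, Vt.star => 2
  | Vt.one, Vt.one => 2
  | Vt.star, Vt.one => 2
  | Vt.one, Vt.star => 2
  | Vt.star, Vt.br _ j => if (j : ℕ) = 0 then -1 else 0
  | Vt.br _ j, Vt.star => if (j : ℕ) = 0 then -1 else 0
  | Vt.one, Vt.br _ j => if (j : ℕ) = 0 then -1 else 0
  | Vt.br _ j, Vt.one => if (j : ℕ) = 0 then -1 else 0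
  | Vt.br i j, Vt.br i' j' =>
      if i = i' ∧ ((j : ℕ) = (j' : ℕ) + 1 ∨ (j' : ℕ) = (j : ℕ) + 1) then -1
      else if i = i' ∧ (j : ℕ) = (j' : ℕ) then 2 else 0

/-- The root lattice `L̃`: the free `ℤ`-module with basis `{α_v : v ∈ Ṽ_A}`. -/
abbrev Lt (a : Fin 3 → ℕ) : Type := Vt a →₀ ℤ

/-- The basis vector `α_v ∈ L̃`. -/
def gen (a : Fin 3 → ℕ) (v : Vt a) : Lt a := Finsupp.single v 1

/-- The symmetric bilinear form `Ĩ` on `L̃`. -/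
def Iform (a : Fin 3 → ℕ) (x y : Lt a) : ℤ :=
  x.sum fun u xu => y.sum fun v yv => xu * yv * cartan a u v

/-- `δ := α_{𝟙*} − α_𝟙`. -/
def delta (a : Fin 3 → ℕ) : Lt a := gen a Vt.star - gen a Vt.one

/-- The reflection `r_α(x) = x − Ĩ(α, x) α` (for `α` with `Ĩ(α,α) = 2`). -/
def reflect (a : Fin 3 → ℕ) (α : Lt a) (x : Lt a) : Lt a := x - Iform a α x • α

/-- The composite `r_{α_{(i,1)}} ∘ r_{α_{(i,2)}} ∘ ⋯ ∘ r_{α_{(i, a i − 1)}}`. -/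
def branchComp (a : Fin 3 → ℕ) (i : Fin 3) : Lt a → Lt a :=
  (List.finRange (a i - 1)).foldr (fun j f => reflect a (gen a (Vt.br i j)) ∘ f) id

/-- The Coxeter transformation
`c̃_A := r_{α_{𝟙*}} ∘ r_{α_𝟙} ∘ r_{α_{(1,1)}} ∘ ⋯ ∘ r_{α_{(3, a₃ − 1)}}`. -/
def coxeter (a : Fin 3 → ℕ) : Lt a → Lt a :=
  reflect a (gen a Vt.star) ∘ reflect a (gen a Vt.one) ∘
    branchComp a 0 ∘ branchComp a 1 ∘ branchComp a 2

/-- A `ℤ`-bilinear form `χ` on `L̃` is an Euler form for `(L̃, Ĩ, c̃_A)` if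
`Ĩ = χ + χᵀ` and `χ(λ, λ') = −χ(λ', c̃_A(λ))` (Serre duality). -/
def IsEulerForm (a : Fin 3 → ℕ) (χ : Lt a →ₗ[ℤ] Lt a →ₗ[ℤ] ℤ) : Prop :=
  (∀ x y : Lt a, Iform a x y = χ x y + χ y x) ∧
  (∀ x y : Lt a, χ x y = - χ y (coxeter a x))

/-- The twist automorphism `t_δ(λ) = λ − χ(δ, λ) δ` (as a function). -/
def twist (a : Fin 3 → ℕ) (χ : Lt a →ₗ[ℤ] Lt a →ₗ[ℤ] ℤ) (x : Lt a) : Lt a :=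
  x - χ (delta a) x • delta a

/-- The inverse of the twist automorphism, `λ ↦ λ + χ(δ, λ) δ`. -/
def twistInv (a : Fin 3 → ℕ) (χ : Lt a →ₗ[ℤ] Lt a →ₗ[ℤ] ℤ) (x : Lt a) : Lt a :=
  x + χ (delta a) x • delta a

/-- The simple reflections `r_{α_v}`, viewed as the set of `ℤ`-linear
automorphisms of `L̃` whose underlying function is `reflect a (gen a v)`. -/
def weylGens (a : Fin 3 → ℕ) : Set (Lt a ≃ₗ[ℤ] Lt a) :=
  { g | ∃ v : Vt a, ∀ x : Lt a, g x = reflect a (gen a v) x }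

/-- The affine Weyl group `W̃_A`, generated by the simple reflections. -/
def weyl (a : Fin 3 → ℕ) : Subgroup (Lt a ≃ₗ[ℤ] Lt a) := Subgroup.closure (weylGens a)

/-- The set of real roots `Δ̃_re = {w(α_v) : w ∈ W̃_A, v ∈ Ṽ_A}`. -/
def realRoots (a : Fin 3 → ℕ) : Set (Lt a) :=
  { x | ∃ w ∈ weyl a, ∃ v : Vt a, x = w (gen a v) }

/-- The extended affine Weyl group `W̃_A^ext`, generated by `W̃_A` and `t_δ`. -/
def extWeyl (a : Fin 3 → ℕ) (χ : Lt a →ₗ[ℤ] Lt a →ₗ[ℤ] ℤ) :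
    Subgroup (Lt a ≃ₗ[ℤ] Lt a) :=
  Subgroup.closure (weylGens a ∪ { g | ∀ x : Lt a, g x = twist a χ x })

/-!
Order the vertices as the reflections occur in `c̃_A`. The form `χ` whose Gram matrix is upper
unitriangular, with entry `Ĩ(α_u, α_v)` when `u` precedes `v`, is an Euler form: peeling off the
reflections in front of and behind `r_{α_u}` gives `χ(α_u, c̃_A λ) = −χ(λ, α_u)`.
Being unimodular, `χ` identifies `L̃` with its dual, and `χ(y, λ − c̃_A λ) = Ĩ(λ, y)` shows that
`χ(y, ·)` is `c̃_A`-invariant exactly when `y` lies in the radical of `Ĩ`. For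
`1/a₁ + 1/a₂ + 1/a₃ > 1` the radical is `ℤδ`: along each branch a radical vector has affine
coefficients, and the equation at `𝟙*` then forces `y_{𝟙*} + y_𝟙 = 0`.
If `χ'` is a second Euler form, `χ' − χ` is skew and `c̃_A`-invariant in its second argument,
hence `(χ' − χ)(λ, ·) = k(λ) χ(δ, ·)`; evaluating at `α_{𝟙*}`, where `χ(δ, ·)` takes the value
`1`, and using skewness gives `k = 0`.
-/

variable {a : Fin 3 → ℕ}

open Matrix in
lemma _root_.Matrix.toLinearMap₂_surjective {R n M : Type*} [CommRing R] [Fintype n]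
    [DecidableEq n] [AddCommGroup M] [Module R M] (b : Module.Basis n R M) {A : Matrix n n R}
    (hA : IsUnit A.det) : Function.Surjective (Matrix.toLinearMap₂ b b A) := by
  intro ψ
  refine ⟨b.equivFun.symm ((fun j => ψ (b j)) ᵥ* A⁻¹), b.ext fun j => ?_⟩
  have h : (fun j => ψ (b j)) ᵥ* A⁻¹ ᵥ* A = fun j => ψ (b j) := by
    rw [Matrix.vecMul_vecMul, Matrix.nonsing_inv_mul A hA, Matrix.vecMul_one]
  simpa [Matrix.vecMul, dotProduct, Finsupp.single_apply] using congr_fun h j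

lemma eq_add_mul_of_sub_eq_sub {x : ℕ → ℤ} {m : ℕ}
    (h : ∀ j < m, x (j + 2) - x (j + 1) = x (j + 1) - x j) :
    ∀ j ≤ m + 1, x j = x 0 + j * (x 1 - x 0) := by
  have step : ∀ j ≤ m, x (j + 1) - x j = x 1 - x 0 := by
    intro j hj
    induction j with
    | zero => rfl
    | succ j ih => rw [h j (by omega), ih (by omega)]
  intro j hj
  induction j with
  | zero => simp
  | succ j ih =>
    have := step j (by omega)
    rw [ih (by omega)] at this
    push_cast
    linarith

lemma eq_zero_of_add_mul_eq_zero {ι : Type*} [Fintype ι] {N : ι → ℕ} (hN : ∀ i, 0 < N i)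
    (hsum : ∑ i, (N i : ℚ)⁻¹ ≠ 1) {s : ℤ} {d : ι → ℤ} (h : ∀ i, s + N i * d i = 0)
    (hd : ∑ i, d i = -s) : s = 0 := by
  have hdi : ∀ i, (d i : ℚ) = -s * (N i : ℚ)⁻¹ := fun i => by
    have hi : (s : ℚ) + N i * d i = 0 := by exact_mod_cast h i
    have : (N i : ℚ) ≠ 0 := by exact_mod_cast (hN i).ne'
    field_simp
    linarith
  have hq : (s : ℚ) * (∑ i, (N i : ℚ)⁻¹ - 1) = 0 := by
    have : ∑ i, (d i : ℚ) = -s := by exact_mod_cast hd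
    simp only [hdi, ← Finset.mul_sum] at this
    linarith
  exact_mod_cast (mul_eq_zero.mp hq).resolve_right (sub_ne_zero.mpr hsum)

lemma inv_le_inv_sub_one_add_one (n : ℕ) : (n : ℚ)⁻¹ ≤ ((n - 1 + 1 : ℕ) : ℚ)⁻¹ := by
  rcases n with _ | n <;> simp

namespace Vt

/-- The position of a vertex among the factors of `coxeter a`. -/
def key : Vt a → ℕ ×ₗ ℕ
  | star => toLex (0, 0)
  | one => toLex (1, 0)
  | br i j => toLex ((i : ℕ) + 2, (j : ℕ))

lemma key_injective : Function.Injective (key (a := a)) := by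
  rintro (_ | _ | ⟨i, j⟩) (_ | _ | ⟨i', j'⟩) h
  case br.br =>
    obtain ⟨hi, hj⟩ : (i : ℕ) = i' ∧ (j : ℕ) = j' := by simpa [key] using h
    obtain rfl := Fin.ext hi
    exact congrArg (br i) (Fin.ext hj)
  all_goals simp [key] at h ⊢

instance : LinearOrder (Vt a) := LinearOrder.lift' key key_injective

lemma lt_iff_key_lt {u v : Vt a} : u < v ↔ key u < key v := Iff.rfl

end Vt

open Vt

def reflections (a : Fin 3 → ℕ) (l : List (Vt a)) : Lt a → Lt a :=
  l.foldr (fun w f => reflect a (gen a w) ∘ f) id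

lemma reflections_cons (w : Vt a) (l : List (Vt a)) (x : Lt a) :
    reflections a (w :: l) x = reflect a (gen a w) (reflections a l x) := rfl

lemma reflections_append (l₁ l₂ : List (Vt a)) (x : Lt a) :
    reflections a (l₁ ++ l₂) x = reflections a l₁ (reflections a l₂ x) := by
  induction l₁ with
  | nil => rfl
  | cons w l ih => simp only [List.cons_append, reflections_cons, ih]

def branch (a : Fin 3 → ℕ) (i : Fin 3) : List (Vt a) := (List.finRange (a i - 1)).map (br i)

def coxeterList (a : Fin 3 → ℕ) : List (Vt a) :=
  star :: one :: (branch a 0 ++ branch a 1 ++ branch a 2)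

lemma coxeter_eq_reflections : coxeter a = reflections a (coxeterList a) := by
  have h : ∀ i, branchComp a i = reflections a (branch a i) := fun i => by
    rw [branchComp, reflections, branch, List.foldr_map]
  funext x
  simp only [coxeter, coxeterList, h, Function.comp_apply, reflections_cons, reflections_append]

lemma mem_coxeterList (u : Vt a) : u ∈ coxeterList a := by
  rcases u with _ | _ | ⟨i, j⟩
  · simp [coxeterList]
  · simp [coxeterList]
  · fin_cases i <;> simp [coxeterList, branch]

lemma pairwise_coxeterList : (coxeterList a).Pairwise (· < ·) := by
  simp [coxeterList, branch, List.pairwise_append, List.pairwise_map, lt_iff_key_lt, key,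
    Prod.Lex.toLex_lt_toLex, or_imp, forall_and, List.pairwise_lt_finRange]

lemma cartan_symm (u v : Vt a) : cartan a u v = cartan a v u := by
  rcases u with _ | _ | ⟨i, j⟩ <;> rcases v with _ | _ | ⟨i', j'⟩ <;> simp only [cartan]
  simp only [eq_comm (a := i), eq_comm (a := (j : ℕ)), or_comm]

lemma cartan_self (u : Vt a) : cartan a u u = 2 := by
  rcases u with _ | _ | ⟨i, j⟩ <;> simp [cartan]

def eulerMatrix (a : Fin 3 → ℕ) : Matrix (Vt a) (Vt a) ℤ :=
  Matrix.of fun u v => if u = v then 1 else if u < v then cartan a u v else 0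

lemma eulerMatrix_eq_zero_of_lt {u v : Vt a} (h : v < u) : eulerMatrix a u v = 0 := by
  simp [eulerMatrix, h.ne', h.not_gt]

lemma eulerMatrix_add_swap (u v : Vt a) :
    eulerMatrix a u v + eulerMatrix a v u = cartan a u v := by
  rcases lt_trichotomy u v with h | rfl | h
  · simp [eulerMatrix, h, h.ne, h.ne', h.not_gt]
  · simp [eulerMatrix, cartan_self]
  · simp [eulerMatrix, h, h.ne, h.ne', h.not_gt, cartan_symm]

lemma gen_eq_basisSingleOne (v : Vt a) : gen a v = Finsupp.basisSingleOne v := by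
  simp [gen]

def eulerForm (a : Fin 3 → ℕ) : Lt a →ₗ[ℤ] Lt a →ₗ[ℤ] ℤ :=
  Matrix.toLinearMap₂ Finsupp.basisSingleOne Finsupp.basisSingleOne (eulerMatrix a)

lemma eulerForm_gen_gen (u v : Vt a) : eulerForm a (gen a u) (gen a v) = eulerMatrix a u v := by
  simp only [eulerForm, gen_eq_basisSingleOne, Matrix.toLinearMap₂_apply_basis]

lemma Iform_eq_toLinearMap₂ (x y : Lt a) :
    Iform a x y = Matrix.toLinearMap₂ Finsupp.basisSingleOne Finsupp.basisSingleOne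
      (Matrix.of (cartan a)) x y := by
  simp [Iform, Finsupp.sum_fintype, mul_comm, mul_left_comm]

lemma Iform_eq_eulerForm_add (x y : Lt a) : Iform a x y = eulerForm a x y + eulerForm a y x := by
  rw [Iform_eq_toLinearMap₂]
  suffices h : Matrix.toLinearMap₂ Finsupp.basisSingleOne Finsupp.basisSingleOne
      (Matrix.of (cartan a)) = eulerForm a + (eulerForm a).flip from
    LinearMap.congr_fun₂ h x y
  refine LinearMap.ext_basis Finsupp.basisSingleOne Finsupp.basisSingleOne fun u v => ?_
  rw [Matrix.toLinearMap₂_apply_basis, LinearMap.add_apply, LinearMap.add_apply,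
    LinearMap.flip_apply, ← gen_eq_basisSingleOne, ← gen_eq_basisSingleOne, eulerForm_gen_gen,
    eulerForm_gen_gen, eulerMatrix_add_swap, Matrix.of_apply]

lemma apply_reflect_gen (ψ : Lt a →ₗ[ℤ] ℤ) (w : Vt a) (x : Lt a) :
    ψ (reflect a (gen a w) x) = ψ x - Iform a (gen a w) x * ψ (gen a w) := by
  rw [reflect, map_sub, map_smul, smul_eq_mul]

lemma apply_reflections_of_forall_eq_zero (ψ : Lt a →ₗ[ℤ] ℤ) {l : List (Vt a)}
    (h : ∀ w ∈ l, ψ (gen a w) = 0) (x : Lt a) : ψ (reflections a l x) = ψ x := by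
  induction l with
  | nil => rfl
  | cons w l ih =>
    rw [reflections_cons, apply_reflect_gen, h w List.mem_cons_self, mul_zero, sub_zero,
      ih fun v hv => h v (List.mem_cons_of_mem _ hv)]

lemma eulerForm_gen_coxeter (u : Vt a) (x : Lt a) :
    eulerForm a (gen a u) (coxeter a x) = - eulerForm a x (gen a u) := by
  obtain ⟨l₁, l₂, hl⟩ := List.append_of_mem (mem_coxeterList u)
  have hsorted := pairwise_coxeterList (a := a)
  rw [hl, List.pairwise_append, List.pairwise_cons] at hsorted
  have before : ∀ w ∈ l₁, eulerForm a (gen a u) (gen a w) = 0 := fun w hw => by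
    rw [eulerForm_gen_gen, eulerMatrix_eq_zero_of_lt (hsorted.2.2 w hw u List.mem_cons_self)]
  have after : ∀ w ∈ l₂, (eulerForm a).flip (gen a u) (gen a w) = 0 := fun w hw => by
    rw [LinearMap.flip_apply, eulerForm_gen_gen, eulerMatrix_eq_zero_of_lt (hsorted.2.1.1 w hw)]
  rw [coxeter_eq_reflections, hl, reflections_append, reflections_cons,
    apply_reflections_of_forall_eq_zero _ before, apply_reflect_gen, eulerForm_gen_gen,
    show eulerMatrix a u u = 1 by simp [eulerMatrix], mul_one, Iform_eq_eulerForm_add,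
    sub_add_cancel_left, ← LinearMap.flip_apply (m := x),
    ← apply_reflections_of_forall_eq_zero _ after x]
  rfl

lemma isEulerForm_eulerForm : IsEulerForm a (eulerForm a) := by
  refine ⟨Iform_eq_eulerForm_add, fun x y => ?_⟩
  have h : eulerForm a x = -(eulerForm a).flip (coxeter a x) :=
    Finsupp.basisSingleOne.ext fun v => by simp [← gen_eq_basisSingleOne, eulerForm_gen_coxeter]
  exact LinearMap.congr_fun h y

lemma eulerForm_surjective : Function.Surjective (eulerForm a) := by
  refine Matrix.toLinearMap₂_surjective _ ?_
  rw [Matrix.det_of_isUpperTriangular (M := eulerMatrix a)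
    fun u v h => eulerMatrix_eq_zero_of_lt h]
  simp [eulerMatrix]

/-- Position `j` holds the coefficient of `α_{(i,j)}`, i.e. of the vertex `br i ⟨j - 1, _⟩`;
the padding by `y_{𝟙*} + y_𝟙` at `0` and by `0` past the branch makes the radical equations
along branch `i` say that the second differences vanish. -/
def branchCoord (y : Lt a) (i : Fin 3) : ℕ → ℤ
  | 0 => y star + y one
  | j + 1 => if h : j < a i - 1 then y (br i ⟨j, h⟩) else 0

lemma branchCoord_add (y z : Lt a) (i : Fin 3) (j : ℕ) :
    branchCoord (y + z) i j = branchCoord y i j + branchCoord z i j := by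
  cases j with
  | zero => simp only [branchCoord, Finsupp.add_apply]; ring
  | succ j => simp only [branchCoord, Finsupp.add_apply]; split_ifs <;> simp

lemma Iform_gen_single (v u : Vt a) (c : ℤ) :
    Iform a (gen a v) (Finsupp.single u c) = c * cartan a v u := by
  simp [Iform, gen]

lemma Iform_gen_br (i : Fin 3) (j : Fin (a i - 1)) (y : Lt a) :
    Iform a (gen a (br i j)) y =
      2 * branchCoord y i (j + 1) - branchCoord y i j - branchCoord y i (j + 2) := by
  induction y using Finsupp.induction_linear with
  | zero => rcases j with ⟨_ | j, hj⟩ <;> simp [Iform, branchCoord]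
  | add y z hy hz =>
    simp only [Iform_eq_toLinearMap₂, map_add, branchCoord_add] at *
    rw [hy, hz]; ring
  | single u c =>
    rw [Iform_gen_single]
    rcases u with _ | _ | ⟨i', j'⟩
    case star | one => rcases j with ⟨_ | j, hj⟩ <;> simp [branchCoord, cartan]
    case br =>
      by_cases hi : i' = i
      · subst hi
        rcases j with ⟨_ | j, hj⟩ <;>
          simp only [branchCoord, cartan, Finsupp.single_apply, br.injEq, heq_eq_eq,
            Fin.ext_iff] <;> grind
      · rcases j with ⟨_ | j, hj⟩ <;> simp [branchCoord, cartan, Ne.symm hi]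

lemma Iform_gen_star (y : Lt a) :
    Iform a (gen a star) y = 2 * (y star + y one) - ∑ i, branchCoord y i 1 := by
  induction y using Finsupp.induction_linear with
  | zero => simp [Iform, branchCoord]
  | add y z hy hz =>
    simp only [Iform_eq_toLinearMap₂, map_add, branchCoord_add, Finset.sum_add_distrib,
      Finsupp.add_apply] at *
    rw [hy, hz]; ring
  | single u c =>
    rw [Iform_gen_single]
    rcases u with _ | _ | ⟨i', j'⟩
    case star | one => simp [branchCoord, cartan, mul_comm]
    case br =>
      rw [Fintype.sum_eq_single i' fun i hi => by simp [branchCoord, Ne.symm hi]]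
      have hj' : 0 < a i' - 1 := by have := j'.isLt; omega
      simp only [branchCoord, cartan, dif_pos hj']
      split_ifs <;> simp_all [Finsupp.single_apply, Fin.ext_iff]

lemma eq_smul_delta_of_forall_Iform_eq_zero
    (hA : 1 < (a 0 : ℚ)⁻¹ + (a 1 : ℚ)⁻¹ + (a 2 : ℚ)⁻¹) {y : Lt a}
    (hy : ∀ v, Iform a (gen a v) y = 0) : ∃ k : ℤ, y = k • delta a := by
  set s := y star + y one
  set d : Fin 3 → ℤ := fun i => branchCoord y i 1 - s
  have affine : ∀ i, ∀ j ≤ a i - 1 + 1, branchCoord y i j = s + j * d i := fun i =>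
    eq_add_mul_of_sub_eq_sub fun j hj => by
      have := hy (br i ⟨j, hj⟩)
      rw [Iform_gen_br] at this
      linarith
  have hend : ∀ i, s + (a i - 1 + 1 : ℕ) * d i = 0 := fun i => by
    rw [← affine i _ le_rfl]
    simp [branchCoord]
  have hs : s = 0 := by
    refine eq_zero_of_add_mul_eq_zero (fun i => Nat.succ_pos _) ?_ hend ?_
    · rw [Fin.sum_univ_three]
      have := inv_le_inv_sub_one_add_one (a 0)
      have := inv_le_inv_sub_one_add_one (a 1)
      have := inv_le_inv_sub_one_add_one (a 2)
      linarith
    · have := hy star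
      rw [Iform_gen_star, Fin.sum_univ_three] at this
      simp only [d, Fin.sum_univ_three]
      linarith
  have hbr : ∀ i j, y (br i j) = 0 := fun i j => by
    have hd : d i = 0 := by simpa [hs, Nat.cast_add_one_ne_zero] using hend i
    simpa [branchCoord, hs, hd] using affine i (j + 1) (by omega)
  refine ⟨y star, Finsupp.ext fun v => ?_⟩
  rcases v with _ | _ | ⟨i, j⟩
  · simp [delta, gen]
  · have hone : y one = -y star := by linarith
    simp [delta, gen, hone]
  · simp [delta, gen, hbr]

namespace IsEulerForm

variable {χ χ' : Lt a →ₗ[ℤ] Lt a →ₗ[ℤ] ℤ}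

lemma exists_eq_smul_of_apply_coxeter (hχ : IsEulerForm a χ) (hsurj : Function.Surjective χ)
    (hA : 1 < (a 0 : ℚ)⁻¹ + (a 1 : ℚ)⁻¹ + (a 2 : ℚ)⁻¹) {ψ : Lt a →ₗ[ℤ] ℤ}
    (hψ : ∀ y, ψ (coxeter a y) = ψ y) : ∃ k : ℤ, ψ = k • χ (delta a) := by
  obtain ⟨y₀, rfl⟩ := hsurj ψ
  obtain ⟨k, rfl⟩ := eq_smul_delta_of_forall_Iform_eq_zero hA fun v => by
    rw [hχ.1, hχ.2 (gen a v) y₀, hψ]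
    ring
  exact ⟨k, map_smul χ k (delta a)⟩

lemma sub_apply_swap (hχ : IsEulerForm a χ) (hχ' : IsEulerForm a χ') (x y : Lt a) :
    (χ' - χ) x y = -(χ' - χ) y x := by
  have := hχ.1 x y
  have := hχ'.1 x y
  simp only [LinearMap.sub_apply]
  linarith

lemma sub_apply_coxeter (hχ : IsEulerForm a χ) (hχ' : IsEulerForm a χ') (x y : Lt a) :
    (χ' - χ) x (coxeter a y) = (χ' - χ) x y := by
  rw [sub_apply_swap hχ hχ' x y]
  simp only [LinearMap.sub_apply, hχ.2 y x, hχ'.2 y x]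
  ring

lemma eq_of_surjective (hχ' : IsEulerForm a χ') (hχ : IsEulerForm a χ)
    (hsurj : Function.Surjective χ) (hδ : χ (delta a) (gen a star) = 1)
    (hA : 1 < (a 0 : ℚ)⁻¹ + (a 1 : ℚ)⁻¹ + (a 2 : ℚ)⁻¹) : χ' = χ := by
  choose k hk using fun x =>
    hχ.exists_eq_smul_of_apply_coxeter hsurj hA (sub_apply_coxeter hχ hχ' x)
  have hk_eq : ∀ x, k x = (χ' - χ) x (gen a star) := fun x => by
    simp [hk x, hδ]
  have hk_star : k (gen a star) = 0 := by
    have := sub_apply_swap hχ hχ' (gen a star) (gen a star)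
    rw [hk_eq]
    linarith
  refine sub_eq_zero.mp (LinearMap.ext fun x => ?_)
  rw [hk x, hk_eq, sub_apply_swap hχ hχ', hk, hk_star]
  simp

end IsEulerForm

lemma eulerForm_delta_gen_star : eulerForm a (delta a) (gen a star) = 1 := by
  simp [delta, eulerForm_gen_gen, eulerMatrix, lt_iff_key_lt, key, Prod.Lex.toLex_lt_toLex]

theorem euler_form_existsUnique_general (a : Fin 3 → ℕ)
    (hA : 1 < (a 0 : ℚ)⁻¹ + (a 1 : ℚ)⁻¹ + (a 2 : ℚ)⁻¹) :
    ∃! χ : Lt a →ₗ[ℤ] Lt a →ₗ[ℤ] ℤ, IsEulerForm a χ :=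
  ⟨eulerForm a, isEulerForm_eulerForm, fun _ hχ =>
    hχ.eq_of_surjective isEulerForm_eulerForm eulerForm_surjective eulerForm_delta_gen_star hA⟩

/-- **Existence and uniqueness of the Euler form** for the generalized root
system `(R̃_A, c̃_A)` of affine ADE type (Lemma 2.12 of NST + Lemma 3.2 of the
paper): there exists exactly one `ℤ`-bilinear form `χ : L̃ × L̃ → ℤ` with
`Ĩ(λ,λ') = χ(λ,λ') + χ(λ',λ)` and `χ(λ,λ') = −χ(λ', c̃_A(λ))` for all `λ, λ'`. -/
theorem euler_form_existsUnique (a : Fin 3 → ℕ) (ha : ∀ i, 0 < a i)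
    (hA : 1 < (a 0 : ℚ)⁻¹ + (a 1 : ℚ)⁻¹ + (a 2 : ℚ)⁻¹) :
    ∃! χ : Lt a →ₗ[ℤ] Lt a →ₗ[ℤ] ℤ, IsEulerForm a χ :=
  euler_form_existsUnique_general a hA

end
end AffineGRS
end

section
/- The twist automorphism t_δ : L̃ → L̃, t_δ(λ) = λ − χ(δ,λ)δ, is a ℤ-module automorphism of L̃ (with inverse λ ↦ λ + χ(δ,λ)δ) and preserves Ĩ, i.e. Ĩ(t_δ(λ), t_δ(λ')) = Ĩ(λ, λ') for all λ, λ' ∈ L̃. -/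
namespace AffineGRS

noncomputable section

lemma Iform_eq (a : Fin 3 → ℕ) (x y : Lt a) :
    Iform a x y = ∑ u : Vt a, ∑ v : Vt a, x u * y v * cartan a u v := by
  rw [Iform, Finsupp.sum_fintype]
  · refine Finset.sum_congr rfl fun u _ => ?_
    rw [Finsupp.sum_fintype]
    intro v; ring
  · intro u; simp

lemma Iform_sub_left (a : Fin 3 → ℕ) (x z y : Lt a) :
    Iform a (x - z) y = Iform a x y - Iform a z y := by
  simp [Iform_eq, sub_mul, Finset.sum_sub_distrib]

lemma Iform_sub_right (a : Fin 3 → ℕ) (x y z : Lt a) :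
    Iform a x (y - z) = Iform a x y - Iform a x z := by
  simp [Iform_eq, sub_mul, mul_sub, Finset.sum_sub_distrib]

lemma Iform_smul_left (a : Fin 3 → ℕ) (c : ℤ) (x y : Lt a) :
    Iform a (c • x) y = c * Iform a x y := by
  simp [Iform_eq, Finset.mul_sum, mul_assoc]

lemma Iform_smul_right (a : Fin 3 → ℕ) (c : ℤ) (x y : Lt a) :
    Iform a x (c • y) = c * Iform a x y := by
  simp [Iform_eq, Finset.mul_sum]
  refine Finset.sum_congr rfl fun u _ => Finset.sum_congr rfl fun v _ => by ring

lemma cartan_star_left (a : Fin 3 → ℕ) (v : Vt a) :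
    cartan a Vt.star v = cartan a Vt.one v := by cases v <;> rfl

lemma cartan_star_right (a : Fin 3 → ℕ) (v : Vt a) :
    cartan a v Vt.star = cartan a v Vt.one := by cases v <;> rfl

lemma Iform_gen_left (a : Fin 3 → ℕ) (w : Vt a) (y : Lt a) :
    Iform a (gen a w) y = ∑ v : Vt a, y v * cartan a w v := by
  rw [Iform_eq, Finset.sum_comm]
  refine Finset.sum_congr rfl fun v _ => ?_
  simp [gen, Finsupp.single_apply, ite_mul]

lemma Iform_gen_right (a : Fin 3 → ℕ) (w : Vt a) (x : Lt a) :
    Iform a x (gen a w) = ∑ u : Vt a, x u * cartan a u w := by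
  rw [Iform_eq]
  refine Finset.sum_congr rfl fun u _ => ?_
  simp [gen, Finsupp.single_apply, ite_mul, mul_ite]

lemma Iform_delta_left (a : Fin 3 → ℕ) (y : Lt a) : Iform a (delta a) y = 0 := by
  rw [delta, Iform_sub_left, Iform_gen_left, Iform_gen_left]
  simp [cartan_star_left]

lemma Iform_delta_right (a : Fin 3 → ℕ) (x : Lt a) : Iform a x (delta a) = 0 := by
  rw [delta, Iform_sub_right, Iform_gen_right, Iform_gen_right]
  simp [cartan_star_right]

lemma chi_delta_delta (a : Fin 3 → ℕ) (χ : Lt a →ₗ[ℤ] Lt a →ₗ[ℤ] ℤ)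
    (hχ : IsEulerForm a χ) : χ (delta a) (delta a) = 0 := by
  have h := hχ.1 (delta a) (delta a)
  rw [Iform_delta_left] at h
  omega

/-- **The twist is a `ℤ`-module automorphism preserving `Ĩ`**: the twist
automorphism `t_δ(λ) = λ − χ(δ,λ)δ` is `ℤ`-linear, bijective with inverse
`λ ↦ λ + χ(δ,λ)δ`, and satisfies `Ĩ(t_δ(λ), t_δ(λ')) = Ĩ(λ, λ')` for all
`λ, λ' ∈ L̃`. -/
theorem twist_is_automorphism (a : Fin 3 → ℕ) (ha : ∀ i, 0 < a i)
    (hA : 1 < (a 0 : ℚ)⁻¹ + (a 1 : ℚ)⁻¹ + (a 2 : ℚ)⁻¹)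
    (χ : Lt a →ₗ[ℤ] Lt a →ₗ[ℤ] ℤ) (hχ : IsEulerForm a χ) :
    (∀ x y : Lt a, twist a χ (x + y) = twist a χ x + twist a χ y) ∧
    (∀ (n : ℤ) (x : Lt a), twist a χ (n • x) = n • twist a χ x) ∧
    (∀ x : Lt a, twistInv a χ (twist a χ x) = x) ∧
    (∀ x : Lt a, twist a χ (twistInv a χ x) = x) ∧
    (∀ x y : Lt a, Iform a (twist a χ x) (twist a χ y) = Iform a x y) := by
  have hδδ := chi_delta_delta a χ hχ
  refine ⟨?_, ?_, ?_, ?_, ?_⟩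
  · intro x y
    simp only [twist, map_add, LinearMap.add_apply, add_smul]
    abel
  · intro n x
    simp only [twist, map_smul, LinearMap.smul_apply, smul_eq_mul, mul_smul,
      smul_sub]
  · intro x
    simp only [twist, twistInv, map_sub, map_smul, LinearMap.sub_apply,
      LinearMap.smul_apply, smul_eq_mul, hδδ, mul_zero, sub_zero]
    abel
  · intro x
    simp only [twist, twistInv, map_add, map_smul, LinearMap.add_apply,
      LinearMap.smul_apply, smul_eq_mul, hδδ, mul_zero, add_zero]
    abel
  · intro x y
    simp only [twist]
    rw [Iform_sub_left, Iform_sub_right, Iform_sub_right, Iform_smul_left,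
      Iform_smul_right, Iform_smul_left, Iform_delta_left, Iform_delta_right, Iform_delta_left]
    ring

end
end AffineGRS
end
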